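/- Let B, C ∈ [0,1] be real numbers with 1/2 ≤ B ≤ 1/2 + 1/(2√2). Suppose that for every α ∈ [0,1] the inequality α·B + (1−α)·C ≤ 1/2 + (1−α)/(4√2) + √((1−α)² + 4α²)/(4√2) holds. Then C ≤ 1/2 + 1/(4√2) + √(16·B·(1−B) − 2)/8. (This is the information gain–disturbance trade-off relation between Bob's and Charlie's random access code success probabilities derived from the bound of Proposition 2.) -/

import Mathlib

/-!
With `x = C - 1/2` and `b = B - 1/2`, clearing the denominator `u + a` of `α = a / (u + a)`
turns the hypothesis into `a b + u x ≤ (u + √(u² + 4a²)) / (4√2)` for all `u, a ≥ 0`.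
For `s = √(2 - 16 b²) > 0` the choice `(u, a) = (s, 2b)` makes the square root equal to `√2`
and leaves `s x ≤ s / (4√2) + s² / 8`, which is the claim. The endpoint `s = 0` follows by
continuity in `B`, since the hypothesis for `B` implies it for every smaller `B`.
-/

open Real Set Filter

noncomputable def povmBound (α : ℝ) : ℝ :=
  1 / 2 + (1 - α) / (4 * √2) + √((1 - α) ^ 2 + 4 * α ^ 2) / (4 * √2)

noncomputable def tradeoffBound (B : ℝ) : ℝ :=
  1 / 2 + 1 / (4 * √2) + √(16 * B * (1 - B) - 2) / 8

lemma mul_add_mul_le_of_le_povmBound {B C : ℝ}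
    (h : ∀ α ∈ Icc (0 : ℝ) 1, α * B + (1 - α) * C ≤ povmBound α)
    {u a : ℝ} (hu : 0 ≤ u) (ha : 0 ≤ a) (hua : 0 < u + a) :
    a * B + u * C ≤ (u + a) / 2 + (u + √(u ^ 2 + 4 * a ^ 2)) / (4 * √2) := by
  have hα : a / (u + a) ∈ Icc (0 : ℝ) 1 :=
    ⟨by positivity, (div_le_one hua).2 (by linarith)⟩
  have hcompl : 1 - a / (u + a) = u / (u + a) := by field_simp; ring
  have hsqrt : √((u / (u + a)) ^ 2 + 4 * (a / (u + a)) ^ 2) = √(u ^ 2 + 4 * a ^ 2) / (u + a) := by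
    rw [div_pow, div_pow, mul_div_assoc', ← add_div, sqrt_div' _ (sq_nonneg _), sqrt_sq hua.le]
  have hα_bound := h _ hα
  rw [povmBound, hcompl, hsqrt] at hα_bound
  have hne : u + a ≠ 0 := hua.ne'
  calc a * B + u * C = (u + a) * (a / (u + a) * B + u / (u + a) * C) := by field_simp
    _ ≤ (u + a) * (1 / 2 + u / (u + a) / (4 * √2) + √(u ^ 2 + 4 * a ^ 2) / (u + a) / (4 * √2)) :=
      mul_le_mul_of_nonneg_left hα_bound hua.le
    _ = (u + a) / 2 + (u + √(u ^ 2 + 4 * a ^ 2)) / (4 * √2) := by field_simp; ring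

lemma le_tradeoffBound_of_lt {B C : ℝ} (hBlo : 1 / 2 ≤ B) (hBhi : B < 1 / 2 + 1 / (2 * √2))
    (h : ∀ α ∈ Icc (0 : ℝ) 1, α * B + (1 - α) * C ≤ povmBound α) :
    C ≤ tradeoffBound B := by
  have hr2 : √2 ^ 2 = 2 := sq_sqrt zero_le_two
  have hr : 0 < √2 := by positivity
  set b := B - 1 / 2 with hb
  have hb0 : 0 ≤ b := by linarith
  have hb_lt : b * (2 * √2) < 1 := by
    rw [← lt_div_iff₀ (by positivity)]; linarith
  have hdisc : 16 * B * (1 - B) - 2 = 2 - 16 * b ^ 2 := by rw [hb]; ring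
  have hdisc_pos : 0 < 2 - 16 * b ^ 2 := by nlinarith
  set s := √(16 * B * (1 - B) - 2)
  have hs : 0 < s := sqrt_pos.2 (by linarith)
  have hs2 : s ^ 2 = 2 - 16 * b ^ 2 := by rw [sq_sqrt (by linarith), hdisc]
  have key := mul_add_mul_le_of_le_povmBound h hs.le (by positivity : 0 ≤ 2 * b) (by positivity)
  have hsplit : (s + √2) / (4 * √2) = s * (1 / (4 * √2)) + 1 / 4 := by field_simp
  rw [show s ^ 2 + 4 * (2 * b) ^ 2 = 2 by linarith, hsplit] at key
  have hsC : s * C ≤ s * (1 / 2 + 1 / (4 * √2) + s / 8) := by nlinarith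
  exact le_of_mul_le_mul_left hsC hs

lemma continuous_tradeoffBound : Continuous tradeoffBound := by
  unfold tradeoffBound
  fun_prop

theorem tradeoff_relation_general
    (B C : ℝ)
    (hBlo : 1 / 2 ≤ B) (hBhi : B ≤ 1 / 2 + 1 / (2 * Real.sqrt 2))
    (h : ∀ α ∈ Set.Icc (0 : ℝ) 1,
      α * B + (1 - α) * C
        ≤ 1 / 2 + (1 - α) / (4 * Real.sqrt 2)
          + Real.sqrt ((1 - α) ^ 2 + 4 * α ^ 2) / (4 * Real.sqrt 2)) :
    C ≤ 1 / 2 + 1 / (4 * Real.sqrt 2) + Real.sqrt (16 * B * (1 - B) - 2) / 8 := by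
  change C ≤ tradeoffBound B
  rcases hBhi.lt_or_eq with hlt | rfl
  · exact le_tradeoffBound_of_lt hBlo hlt h
  refine ge_of_tendsto (continuous_tradeoffBound.continuousWithinAt (s := Iio _)).tendsto
    (mem_of_superset (Ioo_mem_nhdsLT (lt_add_of_pos_right _ (by positivity))) fun B' hB' => ?_)
  refine le_tradeoffBound_of_lt hB'.1.le hB'.2 fun α hα => le_trans ?_ (h α hα)
  linarith [mul_le_mul_of_nonneg_left hB'.2.le hα.1]

/-- The information gain–disturbance trade-off relation: if Bob's and Charlie's success
probabilities `B, C ∈ [0,1]` with `1/2 ≤ B ≤ 1/2 + 1/(2√2)` satisfy, for every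
`α ∈ [0,1]`, the bound `αB + (1−α)C ≤ P̄_succ^POVM(α)`, then
`C ≤ 1/2 + 1/(4√2) + √(16B(1−B) − 2)/8`. -/
theorem tradeoff_relation
    (B C : ℝ) (hB01 : B ∈ Set.Icc (0 : ℝ) 1) (hC01 : C ∈ Set.Icc (0 : ℝ) 1)
    (hBlo : 1 / 2 ≤ B) (hBhi : B ≤ 1 / 2 + 1 / (2 * Real.sqrt 2))
    (h : ∀ α ∈ Set.Icc (0 : ℝ) 1,
      α * B + (1 - α) * C
        ≤ 1 / 2 + (1 - α) / (4 * Real.sqrt 2)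
          + Real.sqrt ((1 - α) ^ 2 + 4 * α ^ 2) / (4 * Real.sqrt 2)) :
    C ≤ 1 / 2 + 1 / (4 * Real.sqrt 2) + Real.sqrt (16 * B * (1 - B) - 2) / 8 :=
  tradeoff_relation_general B C hBlo hBhi h
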